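/- Let p be a one-variable polynomial of degree at most m, let 1 ≤ l ≤ m, r > 0, and let f be an entire function on ℂ. Then r^l |p^{(l)}(0) f(0)| ≤ ((l+2) m! / (2 (m−l)!)) ∫_{rD} |p f| dm(z)/(π r²), where rD is the disk of radius r and dm is Lebesgue measure. -/

import Mathlib

/-!
Let `a_l = p⁽ˡ⁾(0) / l!`. Applied to `p` rescaled to the circle of radius `s`, Mahler's coefficient
bound gives `|a_l| sˡ ≤ C(m, l) · |lead p| · ∏ max(s, |w|)`, the product over the roots `w` of `p`.
Reflecting the roots inside the disk across the circle gives a polynomial `p*` with `|p*| = |p|` on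
the circle and `|p*(0)| = |lead p| · ∏ max(s, |w|)`, so the mean value property of `p* f` shows
`|a_l| sˡ |f(0)| ≤ C(m, l) · (average of |p f| over the circle of radius s)`.
Integrating against `2π s ds` over `0 < s < r` (polar coordinates) yields
`2π |a_l| |f(0)| r^(l+2) / (l+2) ≤ C(m, l) ∫_{rD} |p f|`, and `C(m, l) · l! = m! / (m - l)!`.
-/

open MeasureTheory Metric Real Set Polynomial ComplexConjugate

protected theorem Multiset.norm_prod {α : Type*} [SeminormedCommRing α] [NormMulClass α]
    [NormOneClass α] (s : Multiset α) : ‖s.prod‖ = (s.map norm).prod :=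
  map_multiset_prod (normHom.toMonoidHom : α →* ℝ) s

section CircleAverage

variable {E : Type*} [NormedAddCommGroup E] [NormedSpace ℝ E]

theorem Real.norm_circleAverage_le_circleAverage_norm (f : ℂ → E) (c : ℂ) (R : ℝ) :
    ‖circleAverage f c R‖ ≤ circleAverage (‖f ·‖) c R := by
  rw [circleAverage, circleAverage, norm_smul, smul_eq_mul, Real.norm_of_nonneg (by positivity)]
  gcongr
  exact intervalIntegral.norm_integral_le_integral_norm two_pi_pos.le

theorem Complex.polarCoord_symm_eq_circleMap (q : ℝ × ℝ) :
    Complex.polarCoord.symm q = circleMap 0 q.1 q.2 := by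
  simp [circleMap, Complex.exp_mul_I, ← Complex.ofReal_cos, ← Complex.ofReal_sin]

theorem setIntegral_ball_zero_eq_setIntegral_polar (F : ℂ → E) (r : ℝ) :
    ∫ z in ball 0 r, F z = ∫ q in Ioo 0 r ×ˢ Ioo (-π) π, q.1 • F (circleMap 0 q.1 q.2) := by
  have hsub : Ioo 0 r ×ˢ Ioo (-π) π ⊆ polarCoord.target :=
    prod_mono (fun s hs ↦ hs.1) subset_rfl
  rw [← integral_indicator measurableSet_ball, ← Complex.integral_comp_polarCoord_symm,
    ← inter_eq_right.2 hsub, ← setIntegral_indicator (measurableSet_Ioo.prod measurableSet_Ioo)]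
  refine setIntegral_congr_fun polarCoord.open_target.measurableSet fun q ⟨(hs : 0 < q.1), hθ⟩ ↦ ?_
  have hmem : circleMap 0 q.1 q.2 ∈ ball 0 r ↔ q ∈ Ioo 0 r ×ˢ Ioo (-π) π := by
    simp [mem_prod, abs_of_pos hs, hs, hθ]
  rw [Complex.polarCoord_symm_eq_circleMap]
  by_cases hq : circleMap 0 q.1 q.2 ∈ ball 0 r
  · rw [indicator_of_mem hq, indicator_of_mem (hmem.1 hq)]
  · rw [indicator_of_notMem hq, indicator_of_notMem (hmem.not.1 hq), smul_zero]

theorem setIntegral_Ioo_circleMap_eq_two_pi_smul_circleAverage [CompleteSpace E] (F : ℂ → E)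
    (c : ℂ) (R : ℝ) :
    ∫ θ in Ioo (-π) π, F (circleMap c R θ) = (2 * π) • circleAverage F c R := by
  rw [circleAverage_eq_integral_add (-π), smul_inv_smul₀ two_pi_pos.ne',
    intervalIntegral.integral_comp_add_right (fun θ ↦ F (circleMap c R θ)),
    intervalIntegral.integral_of_le (by linarith [pi_pos]), integral_Ioc_eq_integral_Ioo]
  ring_nf

theorem setIntegral_ball_zero_eq_intervalIntegral_circleAverage [CompleteSpace E] {F : ℂ → E}
    (hF : Continuous F) {r : ℝ} (hr : 0 ≤ r) :
    ∫ z in ball 0 r, F z = ∫ s in 0..r, (2 * π * s) • circleAverage F 0 s := by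
  have hint : IntegrableOn (fun q : ℝ × ℝ ↦ q.1 • F (circleMap 0 q.1 q.2))
      (Icc 0 r ×ˢ Icc (-π) π) := by
    refine ContinuousOn.integrableOn_compact (isCompact_Icc.prod isCompact_Icc) ?_
    unfold circleMap
    fun_prop
  rw [setIntegral_ball_zero_eq_setIntegral_polar, Measure.volume_eq_prod,
    setIntegral_prod _ (hint.mono_set (prod_mono Ioo_subset_Icc_self Ioo_subset_Icc_self)),
    intervalIntegral.integral_of_le hr, integral_Ioc_eq_integral_Ioo]
  refine setIntegral_congr_fun measurableSet_Ioo fun s _ ↦ ?_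
  rw [integral_smul, setIntegral_Ioo_circleMap_eq_two_pi_smul_circleAverage, smul_smul, mul_comm s]

end CircleAverage

namespace Polynomial

theorem eval_zero_iterate_derivative {R : Type*} [Semiring R] (p : R[X]) (k : ℕ) :
    (derivative^[k] p).eval 0 = k.factorial * p.coeff k := by
  simp [← coeff_zero_eq_eval_zero, coeff_iterate_derivative, Nat.descFactorial_self, nsmul_eq_mul]

/-- The linear factor `X - C w`, except that a root `w` inside the unit disk is reflected to
`1 / conj w`; this does not change the modulus on the unit circle. -/
noncomputable def outerFactor (w : ℂ) : ℂ[X] :=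
  if 1 ≤ ‖w‖ then X - C w else 1 - C (conj w) * X

lemma norm_eval_zero_outerFactor (w : ℂ) : ‖(outerFactor w).eval 0‖ = max 1 ‖w‖ := by
  unfold outerFactor
  split_ifs with hw
  · simp [max_eq_right hw]
  · simp [max_eq_left (not_le.1 hw).le]

lemma norm_eval_outerFactor_of_norm_eq_one (w : ℂ) {z : ℂ} (hz : ‖z‖ = 1) :
    ‖(outerFactor w).eval z‖ = ‖z - w‖ := by
  unfold outerFactor
  split_ifs
  · simp
  · have hzz : 1 - conj w * z = z * conj (z - w) := by
      rw [map_sub, mul_sub, Complex.mul_conj, Complex.normSq_eq_norm_sq, hz]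
      push_cast
      ring
    simp [hzz, hz, -map_sub]

noncomputable def outerPart (q : ℂ[X]) : ℂ[X] :=
  C q.leadingCoeff * (q.roots.map outerFactor).prod

lemma norm_eval_zero_outerPart (q : ℂ[X]) : ‖(outerPart q).eval 0‖ = q.mahlerMeasure := by
  simp [outerPart, eval_multiset_prod, mahlerMeasure_eq_leadingCoeff_mul_prod_roots,
    Multiset.norm_prod, Multiset.map_map, norm_eval_zero_outerFactor]

lemma norm_eval_outerPart_of_norm_eq_one (q : ℂ[X]) {z : ℂ} (hz : ‖z‖ = 1) :
    ‖(outerPart q).eval z‖ = ‖q.eval z‖ := by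
  simp [outerPart, (IsAlgClosed.splits q).eval_eq_prod_roots, eval_multiset_prod,
    Multiset.norm_prod, Multiset.map_map, norm_eval_outerFactor_of_norm_eq_one _ hz]

theorem mahlerMeasure_mul_norm_le_circleAverage (q : ℂ[X]) {g : ℂ → ℂ}
    (hg : DiffContOnCl ℂ g (ball 0 1)) :
    q.mahlerMeasure * ‖g 0‖ ≤ circleAverage (fun z ↦ ‖q.eval z * g z‖) 0 1 := by
  set h : ℂ → ℂ := fun z ↦ (outerPart q).eval z * g z
  have hmean : circleAverage h 0 1 = h 0 :=
    ((outerPart q).differentiable.diffContOnCl.smul (by simpa using hg)).circleAverage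
  have hcircle : circleAverage (‖h ·‖) 0 1 = circleAverage (fun z ↦ ‖q.eval z * g z‖) 0 1 :=
    circleAverage_congr_sphere fun z hz ↦ by
      simp [h, norm_eval_outerPart_of_norm_eq_one q (by simpa using hz)]
  calc q.mahlerMeasure * ‖g 0‖ = ‖circleAverage h 0 1‖ := by
        rw [hmean, norm_mul, norm_eval_zero_outerPart]
    _ ≤ _ := hcircle ▸ norm_circleAverage_le_circleAverage_norm h 0 1

theorem norm_coeff_mul_pow_mul_norm_le_circleAverage {p : ℂ[X]} {m : ℕ} (hp : p.natDegree ≤ m)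
    (l : ℕ) {f : ℂ → ℂ} (hf : Differentiable ℂ f) (s : ℝ) :
    ‖p.coeff l‖ * |s| ^ l * ‖f 0‖ ≤
      m.choose l * circleAverage (fun z ↦ ‖p.eval z * f z‖) 0 s := by
  set q := p.comp (C (s : ℂ) * X)
  have hq : q.natDegree ≤ m := by
    refine natDegree_comp_le.trans ?_
    simpa using Nat.mul_le_mul hp ((natDegree_C_mul_le _ _).trans natDegree_X_le)
  have hcoeff : ‖p.coeff l‖ * |s| ^ l = ‖q.coeff l‖ := by simp [q]
  calc ‖p.coeff l‖ * |s| ^ l * ‖f 0‖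
      ≤ m.choose l * q.mahlerMeasure * ‖f (s * 0)‖ := by
        rw [hcoeff, mul_zero]
        gcongr
        exact (norm_coeff_le_choose_mul_mahlerMeasure l q).trans <|
          mul_le_mul_of_nonneg_right (mod_cast Nat.choose_le_choose l hq) q.mahlerMeasure_nonneg
    _ ≤ m.choose l * circleAverage (fun z ↦ ‖q.eval z * f (s * z)‖) 0 1 := by
        rw [mul_assoc]
        gcongr
        exact mahlerMeasure_mul_norm_le_circleAverage q
          (hf.comp (differentiable_const _ |>.mul differentiable_id)).diffContOnCl
    _ = m.choose l * circleAverage (fun z ↦ ‖p.eval z * f z‖) 0 s := by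
        simp [circleAverage_eq_circleAverage_zero_one (R := s), q, eval_comp]

theorem norm_coeff_mul_norm_le_integral_ball {p : ℂ[X]} {m : ℕ} (hp : p.natDegree ≤ m) (l : ℕ)
    {f : ℂ → ℂ} (hf : Differentiable ℂ f) {r : ℝ} (hr : 0 ≤ r) :
    2 * π * ‖p.coeff l‖ * ‖f 0‖ * (r ^ (l + 2) / (l + 2)) ≤
      m.choose l * ∫ z in ball 0 r, ‖p.eval z * f z‖ := by
  set G : ℂ → ℝ := fun z ↦ ‖p.eval z * f z‖
  have hG : Continuous G := (p.continuous.mul hf.continuous).norm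
  rw [setIntegral_ball_zero_eq_intervalIntegral_circleAverage hG hr,
    ← intervalIntegral.integral_const_mul]
  calc 2 * π * ‖p.coeff l‖ * ‖f 0‖ * (r ^ (l + 2) / (l + 2))
      = ∫ s in 0..r, 2 * π * s * (‖p.coeff l‖ * |s| ^ l * ‖f 0‖) := by
        rw [intervalIntegral.integral_congr (g := fun s ↦ 2 * π * ‖p.coeff l‖ * ‖f 0‖ * s ^ (l + 1))
          fun s hs ↦ ?_, intervalIntegral.integral_const_mul, integral_pow]
        · push_cast
          ring
        · rw [uIcc_of_le hr] at hs
          simp only [abs_of_nonneg hs.1]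
          ring
    _ ≤ ∫ s in 0..r, (m.choose l : ℝ) * ((2 * π * s) • circleAverage G 0 s) := by
        refine intervalIntegral.integral_mono_on hr
          ((by fun_prop : Continuous _).intervalIntegrable _ _)
          ((by fun_prop : Continuous _).intervalIntegrable _ _) fun s hs ↦ ?_
        rw [smul_eq_mul, mul_left_comm (m.choose l : ℝ)]
        exact mul_le_mul_of_nonneg_left (norm_coeff_mul_pow_mul_norm_le_circleAverage hp l hf s)
          (mul_nonneg two_pi_pos.le hs.1)

end Polynomial

theorem derivative_at_zero_disk_estimate_general (m l : ℕ) (hlm : l ≤ m)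
    (r : ℝ) (hr : 0 < r)
    (p : Polynomial ℂ) (hp : p.natDegree ≤ m) (f : ℂ → ℂ) (hf : Differentiable ℂ f) :
    r ^ l * ‖(Polynomial.derivative^[l] p).eval 0 * f 0‖
      ≤ ((l + 2 : ℝ) * m.factorial / (2 * (m - l).factorial)) *
        ((Real.pi * r ^ 2)⁻¹ * ∫ z in ball (0 : ℂ) r, ‖p.eval z * f z‖) := by
  have hfact : (m.factorial : ℝ) = m.choose l * l.factorial * (m - l).factorial := by
    exact_mod_cast (Nat.choose_mul_factorial_mul_factorial hlm).symm
  rw [eval_zero_iterate_derivative, norm_mul, norm_mul, Complex.norm_natCast, hfact]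
  calc r ^ l * (l.factorial * ‖p.coeff l‖ * ‖f 0‖)
      = (l + 2) * l.factorial / (2 * π * r ^ 2) *
          (2 * π * ‖p.coeff l‖ * ‖f 0‖ * (r ^ (l + 2) / (l + 2))) := by
        field_simp
        ring
    _ ≤ (l + 2) * l.factorial / (2 * π * r ^ 2) *
          (m.choose l * ∫ z in ball 0 r, ‖p.eval z * f z‖) :=
        mul_le_mul_of_nonneg_left (norm_coeff_mul_norm_le_integral_ball hp l hf hr.le)
          (by positivity)
    _ = _ := by
        field_simp

theorem derivative_at_zero_disk_estimate (m l : ℕ) (hl : 1 ≤ l) (hlm : l ≤ m)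
    (r : ℝ) (hr : 0 < r)
    (p : Polynomial ℂ) (hp : p.natDegree ≤ m) (f : ℂ → ℂ) (hf : Differentiable ℂ f) :
    r ^ l * ‖(Polynomial.derivative^[l] p).eval 0 * f 0‖
      ≤ ((l + 2 : ℝ) * m.factorial / (2 * (m - l).factorial)) *
        ((Real.pi * r ^ 2)⁻¹ * ∫ z in ball (0 : ℂ) r, ‖p.eval z * f z‖) :=
  derivative_at_zero_disk_estimate_general m l hlm r hr p hp f hf
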